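/- arXiv:1805.01953 — 3 statements merged into one kernel-verified Lean document; each statement's English description precedes it below -/
import Mathlib

section
/- Let G be a minimally bad graph and O a bad connected order of G. If P is a flat path of G, then the vertex of P that is largest with respect to O is an end of P. -/
open Classical in
noncomputable def greedyStep {V : Type*} (G : SimpleGraph V) (f : V → ℕ) (v : V) : V → ℕ :=
  fun u => if u = v then sInf {c : ℕ | 1 ≤ c ∧ ∀ w, G.Adj v w → f w ≠ c} else f u

noncomputable def greedyFrom {V : Type*} (G : SimpleGraph V) (f : V → ℕ) (l : List V) : V → ℕ :=
  l.foldl (greedyStep G) f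

noncomputable def greedy {V : Type*} (G : SimpleGraph V) (l : List V) : V → ℕ :=
  greedyFrom G (fun _ => 0) l

open Classical in
noncomputable def greedyStart2 {V : Type*} (G : SimpleGraph V) : List V → V → ℕ
  | [] => fun _ => 0
  | v :: rest => greedyFrom G (fun u => if u = v then 2 else 0) rest

noncomputable def chi {V : Type*} [Fintype V] (G : SimpleGraph V) : ℕ :=
  sInf {n : ℕ | G.Colorable n}

open Classical in
noncomputable def idx {V : Type*} (l : List V) (v : V) : ℕ := l.idxOf v

noncomputable def maxIdx {V : Type*} (l : List V) (A : Set V) : ℕ := sSup (idx l '' A)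
noncomputable def minIdx {V : Type*} (l : List V) (A : Set V) : ℕ := sInf (idx l '' A)

def IsConnOrder {V : Type*} (G : SimpleGraph V) (l : List V) : Prop :=
  l.Nodup ∧ (∀ v : V, v ∈ l) ∧
    ∀ i : Fin l.length, 0 < i.1 → ∃ j : Fin l.length, j.1 < i.1 ∧ G.Adj (l.get j) (l.get i)

def GoodOrder {V : Type*} [Fintype V] (G : SimpleGraph V) (l : List V) : Prop :=
  ∀ v : V, greedy G l v ≤ chi G

def Good {V : Type*} [Fintype V] (G : SimpleGraph V) : Prop :=
  ∀ s : Finset V, (G.induce (↑s : Set V)).Connected →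
    ∀ l : List ↥(↑s : Set V), IsConnOrder (G.induce (↑s : Set V)) l →
      GoodOrder (G.induce (↑s : Set V)) l

def BadOrder {V : Type*} [Fintype V] (G : SimpleGraph V) (l : List V) : Prop :=
  IsConnOrder G l ∧ ¬ GoodOrder G l

def MinimallyBad {V : Type*} [Fintype V] (G : SimpleGraph V) : Prop :=
  ¬ Good G ∧ ∀ s : Finset V, s ≠ Finset.univ →
    (G.induce (↑s : Set V)).Connected → Good (G.induce (↑s : Set V))

def IsInducedPath {V : Type*} (G : SimpleGraph V) (P : List V) : Prop :=
  P.Nodup ∧ ∀ i j : Fin P.length,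
    G.Adj (P.get i) (P.get j) ↔ (i.1 + 1 = j.1 ∨ j.1 + 1 = i.1)

def IsFlatPath {V : Type*} (G : SimpleGraph V) (P : List V) : Prop :=
  IsInducedPath G P ∧
    ∀ i : Fin P.length, 0 < i.1 → i.1 + 1 < P.length → (G.neighborSet (P.get i)).ncard = 2

def WellOrderedPath {V : Type*} (l P : List V) : Prop :=
  P.Pairwise (fun u v => idx l u < idx l v) ∨ P.Pairwise (fun u v => idx l v < idx l u)

def IsMaxFlatPath {V : Type*} (G : SimpleGraph V) (P : List V) : Prop :=
  IsFlatPath G P ∧ ∀ h : P ≠ [],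
    (G.neighborSet (P.head h)).ncard ≠ 2 ∧ (G.neighborSet (P.getLast h)).ncard ≠ 2

def ClawFree {V : Type*} (G : SimpleGraph V) : Prop :=
  ∀ a b c d : V, G.Adj a b → G.Adj a c → G.Adj a d → b ≠ c → b ≠ d → c ≠ d →
    G.Adj b c ∨ G.Adj b d ∨ G.Adj c d

def IsHole {V : Type*} (G : SimpleGraph V) (C : List V) : Prop :=
  4 ≤ C.length ∧ C.Nodup ∧
    ∀ i j : Fin C.length, G.Adj (C.get i) (C.get j) ↔
      ((i.1 + 1) % C.length = j.1 ∨ (j.1 + 1) % C.length = i.1)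

def GemFree {V : Type*} (G : SimpleGraph V) : Prop :=
  ¬ ∃ a b c d e : V, G.Adj a b ∧ G.Adj b c ∧ G.Adj c d ∧
    ¬ G.Adj a c ∧ ¬ G.Adj a d ∧ ¬ G.Adj b d ∧
    G.Adj e a ∧ G.Adj e b ∧ G.Adj e c ∧ G.Adj e d

/-!
Let `v` be an internal vertex of the flat path that comes last among the path's vertices in `O`.
Both neighbours of `v` precede it, so `v` gets colour at most `3`, deleting `v` changes no other
greedy colour, and `O` restricted to `G - v` is still a connected order. As `G - v` is a proper
connected induced subgraph, it is good, so every other vertex gets colour at most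
`χ(G - v) ≤ χ(G)`. This shows that `O` is good when `χ(G) ≥ 3`; when `χ(G) = 2`, greedy along any
connected order of a bipartite graph uses only two colours.
-/

section Greedy

variable {V : Type*} (G : SimpleGraph V)

@[simp]
lemma greedyStep_self (f : V → ℕ) (v : V) :
    greedyStep G f v v = sInf {c : ℕ | 1 ≤ c ∧ ∀ w, G.Adj v w → f w ≠ c} := by
  simp [greedyStep]

lemma greedyStep_of_ne (f : V → ℕ) {u v : V} (h : u ≠ v) : greedyStep G f v u = f u := by
  simp [greedyStep, h]

lemma greedyStep_self_le {f : V → ℕ} {v : V} {k : ℕ} (hk : 1 ≤ k)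
    (hfree : ∀ w, G.Adj v w → f w ≠ k) : greedyStep G f v v ≤ k := by
  rw [greedyStep_self]
  exact Nat.sInf_le ⟨hk, hfree⟩

lemma greedyStep_self_eq {f : V → ℕ} {v : V} {k : ℕ} (hk : 1 ≤ k)
    (hfree : ∀ w, G.Adj v w → f w ≠ k)
    (hblocked : ∀ j, 1 ≤ j → j < k → ∃ w, G.Adj v w ∧ f w = j) :
    greedyStep G f v v = k := by
  refine le_antisymm (greedyStep_self_le G hk hfree) ?_
  rw [greedyStep_self]
  refine le_csInf ⟨k, hk, hfree⟩ fun j ⟨hj, hjfree⟩ => ?_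
  by_contra! hjk
  obtain ⟨w, hvw, hw⟩ := hblocked j hj hjk
  exact hjfree w hvw hw

lemma greedyStep_self_le_ncard_add_one [Finite V] (f : V → ℕ) (v : V) :
    greedyStep G f v v ≤ (G.neighborSet v).ncard + 1 := by
  by_contra! hgt
  have hblocked : Set.Icc 1 ((G.neighborSet v).ncard + 1) ⊆ f '' G.neighborSet v := by
    rintro k ⟨hk, hkle⟩
    by_contra hkf
    have := greedyStep_self_le G hk fun w hvw hwk => hkf ⟨w, hvw, hwk⟩
    omega
  have := (Set.ncard_le_ncard hblocked).trans (Set.ncard_image_le (f := f))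
  simp at this

lemma greedyFrom_cons (f : V → ℕ) (a : V) (l : List V) :
    greedyFrom G f (a :: l) = greedyFrom G (greedyStep G f a) l := rfl

lemma greedyFrom_append (f : V → ℕ) (l₁ l₂ : List V) :
    greedyFrom G f (l₁ ++ l₂) = greedyFrom G (greedyFrom G f l₁) l₂ :=
  List.foldl_append

lemma greedyFrom_singleton (f : V → ℕ) (a : V) : greedyFrom G f [a] = greedyStep G f a := rfl

lemma greedyFrom_of_notMem (f : V → ℕ) {l : List V} {v : V} (h : v ∉ l) :
    greedyFrom G f l v = f v := by
  induction l generalizing f with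
  | nil => rfl
  | cons a t ih =>
    rw [List.mem_cons, not_or] at h
    rw [greedyFrom_cons, ih _ h.2, greedyStep_of_ne G f h.1]

lemma greedyFrom_le_ncard_add_one [Finite V] (f : V → ℕ) {l : List V} {v : V} (h : v ∈ l) :
    greedyFrom G f l v ≤ (G.neighborSet v).ncard + 1 := by
  induction l generalizing f with
  | nil => simp at h
  | cons a t ih =>
    rw [greedyFrom_cons]
    by_cases hvt : v ∈ t
    · exact ih _ hvt
    · obtain rfl : v = a := by simpa [hvt] using h
      rw [greedyFrom_of_notMem G _ hvt]
      exact greedyStep_self_le_ncard_add_one G f v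

end Greedy

section ConnOrder

variable {V : Type*} {G : SimpleGraph V} {l : List V}

lemma isConnOrder_iff :
    IsConnOrder G l ↔ l.Nodup ∧ (∀ v, v ∈ l) ∧
      ∀ p b q, l = p ++ b :: q → p ≠ [] → ∃ a ∈ p, G.Adj a b := by
  refine and_congr_right fun _ => and_congr_right fun _ =>
    ⟨fun h p b q hl hp => ?_, fun h i hi => ?_⟩
  · subst hl
    obtain ⟨j, hj, hadj⟩ := h ⟨p.length, by simp⟩ (List.length_pos_iff.mpr hp)
    refine ⟨p[j.1], List.getElem_mem _, ?_⟩
    simpa [List.getElem_append_left hj] using hadj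
  · obtain ⟨a, ha, hadj⟩ := h (l.take i) l[i] (l.drop (i + 1)) (by simp)
      (List.ne_nil_of_length_pos (by simp; omega))
    obtain ⟨j, hj, rfl⟩ := List.mem_take_iff_getElem.mp ha
    exact ⟨⟨j, by omega⟩, by simp at hj; omega, hadj⟩

lemma IsConnOrder.reachable (hl : IsConnOrder G l) (x y : V) : G.Reachable x y := by
  obtain ⟨-, hmem, hconn⟩ := isConnOrder_iff.mp hl
  suffices ∀ p q, l = p ++ q → ∀ x ∈ p, ∀ y ∈ p, G.Reachable x y from
    this l [] (by simp) x (hmem x) y (hmem y)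
  intro p
  induction p using List.reverseRecOn with
  | nil => simp
  | append_singleton p b ih =>
    intro q hl
    have hb : ∀ x ∈ p, G.Reachable x b := fun x hx => by
      obtain ⟨a, ha, hab⟩ := hconn p b q (by simpa using hl) (List.ne_nil_of_mem hx)
      exact (ih (b :: q) (by simpa using hl) x hx a ha).trans hab.reachable
    simp only [List.mem_append, List.mem_singleton]
    rintro x (hx | rfl) y (hy | rfl)
    · exact ih (b :: q) (by simpa using hl) x hx y hy
    · exact hb x hx
    · exact (hb y hy).symm
    · rfl

lemma IsConnOrder.connected [Nonempty V] (hl : IsConnOrder G l) : G.Connected :=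
  ⟨hl.reachable⟩

lemma IsConnOrder.greedy_le_two (hl : IsConnOrder G l) (h2 : G.Colorable 2) (x : V) :
    greedy G l x ≤ 2 := by
  classical
  obtain ⟨hnodup, hmem, hconn⟩ := isConnOrder_iff.mp hl
  obtain ⟨C⟩ := h2
  obtain ⟨r, t, hrt⟩ := List.exists_cons_of_ne_nil (List.ne_nil_of_mem (hmem x))
  -- the 2-colouring, shifted so that the first vertex gets colour 1
  set c : V → ℕ := fun y => (C y - C r : Fin 2).val + 1
  have hc_le : ∀ y, c y ≤ 2 := fun y => (C y - C r).isLt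
  have hc_adj : ∀ y z, G.Adj y z → c y ≠ c z := fun y z hyz hc =>
    C.valid hyz (sub_left_inj.mp (Fin.ext (by simpa [c] using hc)))
  suffices ∀ p q, l = p ++ q → ∀ y, greedyFrom G (fun _ => 0) p y = if y ∈ p then c y else 0 by
    rw [greedy, this l [] (by simp), if_pos (hmem x)]
    exact hc_le x
  intro p
  induction p using List.reverseRecOn with
  | nil => simp [greedyFrom]
  | append_singleton p b ih =>
    intro q hl y
    have hg := ih (b :: q) (by simpa using hl)
    rw [greedyFrom_append, greedyFrom_singleton]
    by_cases hyb : y = b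
    · subst hyb
      have hyp : y ∉ p := by
        have := (hl ▸ hnodup).sublist (List.sublist_append_left (p ++ [y]) q)
        simp only [List.nodup_append, List.mem_singleton] at this
        exact fun hy => this.2.2 y hy y rfl rfl
      rw [if_pos (by simp)]
      refine greedyStep_self_eq G (Nat.le_add_left 1 _) (fun w hyw => ?_) fun j hj hjc => ?_
      · rw [hg w]
        split
        · exact (hc_adj y w hyw).symm
        · simp
      · have hp : p ≠ [] := by
          rintro rfl
          obtain rfl : y = r := by simp_all
          simp [c] at hjc
          omega
        obtain ⟨a, ha, hay⟩ := hconn p y q (by simpa using hl) hp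
        refine ⟨a, hay.symm, ?_⟩
        have hca := hc_adj a y hay
        have := hc_le y
        have := hc_le a
        have : 1 ≤ c a := Nat.le_add_left 1 _
        rw [hg a, if_pos ha]
        omega
    · rw [greedyStep_of_ne G _ hyb, hg y]
      simp [hyb]

end ConnOrder

section Restrict

variable {V : Type*} (S : Set V) [DecidablePred (· ∈ S)]

def restrictOrder (l : List V) : List S :=
  l.filterMap fun x => if h : x ∈ S then some ⟨x, h⟩ else none

def NeighborsInPrecede (G : SimpleGraph V) (l : List V) : Prop :=
  l.Pairwise fun a b => a ∉ S → b ∈ S → ¬ G.Adj a b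

variable {S}

@[simp]
lemma restrictOrder_cons_of_mem {a : V} (ha : a ∈ S) (l : List V) :
    restrictOrder S (a :: l) = ⟨a, ha⟩ :: restrictOrder S l := by
  simp [restrictOrder, ha]

@[simp]
lemma restrictOrder_cons_of_notMem {a : V} (ha : a ∉ S) (l : List V) :
    restrictOrder S (a :: l) = restrictOrder S l := by
  simp [restrictOrder, ha]

@[simp]
lemma mem_restrictOrder {l : List V} {x : S} : x ∈ restrictOrder S l ↔ (x : V) ∈ l := by
  simp [restrictOrder]

variable {G : SimpleGraph V} {l : List V}

lemma IsConnOrder.restrictOrder (hl : IsConnOrder G l)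
    (hback : NeighborsInPrecede S G l) :
    IsConnOrder (G.induce S) (restrictOrder S l) := by
  obtain ⟨hnodup, hmem, hconn⟩ := isConnOrder_iff.mp hl
  refine isConnOrder_iff.mpr ⟨?_, fun x => mem_restrictOrder.mpr (hmem x), ?_⟩
  · refine hnodup.filterMap fun a a' b ha ha' => ?_
    simp only [Option.mem_def, Option.dite_none_right_eq_some, Option.some.injEq] at ha ha'
    obtain ⟨_, h⟩ := ha
    obtain ⟨_, h'⟩ := ha'
    exact congrArg Subtype.val (h.trans h'.symm)
  · intro p' b' q' hl' hp'
    obtain ⟨l₁, l₂, rfl, hp, hq⟩ := List.filterMap_eq_append_iff.mp hl'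
    obtain ⟨m, b, r, rfl, hm, hb, -⟩ := List.filterMap_eq_cons_iff.mp hq
    obtain ⟨hbS, rfl⟩ : ∃ h : b ∈ S, ⟨b, h⟩ = b' := by simpa using hb
    have hl₁ : l₁ ≠ [] := by
      rintro rfl
      exact hp' hp.symm
    obtain ⟨a, ha, hab⟩ := hconn (l₁ ++ m) b r (by simp) (by simp [hl₁])
    have haS : a ∈ S := by
      by_contra haS
      rw [NeighborsInPrecede, ← List.append_assoc, List.pairwise_append] at hback
      exact hback.2.2 a ha b List.mem_cons_self haS hbS hab
    have hal₁ : a ∈ l₁ := by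
      rcases List.mem_append.mp ha with h | h
      · exact h
      · simpa [haS] using hm a h
    exact ⟨⟨a, haS⟩, hp ▸ List.mem_filterMap.mpr ⟨a, hal₁, by simp [haS]⟩, hab⟩

lemma greedyStep_induce {f : V → ℕ} {a : V} (ha : a ∈ S)
    (hout : ∀ y ∉ S, G.Adj a y → f y = 0) :
    greedyStep (G.induce S) (f ∘ (↑)) ⟨a, ha⟩ = greedyStep G f a ∘ (↑) := by
  funext x
  by_cases hx : x = ⟨a, ha⟩
  · subst hx
    simp only [Function.comp_apply, greedyStep_self]
    congr 1
    ext c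
    refine and_congr_right fun hc => ⟨fun h w haw => ?_, fun h w haw => h w haw⟩
    by_cases hw : w ∈ S
    · exact h ⟨w, hw⟩ haw
    · rw [hout w hw haw]
      omega
  · have hxa : (x : V) ≠ a := fun h => hx (Subtype.ext h)
    simp [greedyStep_of_ne _ _ hx, greedyStep_of_ne _ _ hxa]

lemma greedyFrom_restrictOrder (hback : NeighborsInPrecede S G l)
    {f : V → ℕ} (hout : ∀ a ∈ l, a ∈ S → ∀ y ∉ S, G.Adj a y → f y = 0) :
    greedyFrom (G.induce S) (f ∘ (↑)) (restrictOrder S l) = greedyFrom G f l ∘ (↑) := by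
  induction l generalizing f with
  | nil => rfl
  | cons a t ih =>
    rw [NeighborsInPrecede, List.pairwise_cons] at hback
    have hout' : ∀ b ∈ t, b ∈ S → ∀ y ∉ S, G.Adj b y → greedyStep G f a y = 0 := by
      intro b hb hbS y hy hby
      obtain rfl | hya := eq_or_ne y a
      · exact absurd hby.symm (hback.1 b hb hy hbS)
      · rw [greedyStep_of_ne G f hya]
        exact hout b (List.mem_cons_of_mem a hb) hbS y hy hby
    by_cases ha : a ∈ S
    · rw [restrictOrder_cons_of_mem ha, greedyFrom_cons, greedyFrom_cons,
        greedyStep_induce ha (hout a List.mem_cons_self ha)]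
      exact ih hback.2 hout'
    · have hfa : greedyStep G f a ∘ (↑) = f ∘ ((↑) : S → V) :=
        funext fun x => greedyStep_of_ne G f fun h => ha (h ▸ x.2)
      rw [restrictOrder_cons_of_notMem ha, greedyFrom_cons, ← hfa]
      exact ih hback.2 hout'

lemma greedy_restrictOrder (hback : NeighborsInPrecede S G l)
    (x : S) : greedy (G.induce S) (restrictOrder S l) x = greedy G l x :=
  congrFun (greedyFrom_restrictOrder hback (f := fun _ => 0) (by simp)) x

end Restrict

section Chi

variable {V : Type*} [Fintype V] {G : SimpleGraph V} {l : List V}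

lemma colorable_chi : G.Colorable (chi G) :=
  Nat.sInf_mem (s := {n | G.Colorable n}) ⟨_, G.colorable_of_fintype⟩

lemma chi_induce_le (S : Set V) [Fintype S] : chi (G.induce S) ≤ chi G :=
  Nat.sInf_le (colorable_chi.of_hom (SimpleGraph.Embedding.induce S).toHom)

lemma two_le_chi_of_adj {u v : V} (huv : G.Adj u v) : 2 ≤ chi G := by
  by_contra! h
  obtain ⟨C⟩ := colorable_chi.mono (Nat.le_of_lt_succ h)
  exact C.valid huv (Subsingleton.elim _ _)

lemma GoodOrder.greedy_le_chi_of_induce {S : Set V} [Fintype S] [DecidablePred (· ∈ S)]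
    (hback : NeighborsInPrecede S G l)
    (hgood : GoodOrder (G.induce S) (restrictOrder S l)) {x : V} (hx : x ∈ S) :
    greedy G l x ≤ chi G := by
  rw [← greedy_restrictOrder hback ⟨x, hx⟩]
  exact (hgood _).trans (chi_induce_le S)

lemma Good.goodOrder (hG : Good G) (hl : IsConnOrder G l) : GoodOrder G l := by
  classical
  intro x
  have hback : NeighborsInPrecede (Finset.univ : Finset V) G l :=
    List.pairwise_of_forall fun a _ ha => absurd (Finset.mem_univ a) ha
  have hl' := hl.restrictOrder hback
  have : Nonempty (Finset.univ : Finset V) := ⟨⟨x, Finset.mem_univ x⟩⟩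
  exact (hG Finset.univ hl'.connected _ hl').greedy_le_chi_of_induce hback (Finset.mem_univ x)

theorem MinimallyBad.goodOrder_of_neighbors_precede (hmin : MinimallyBad G)
    (hl : IsConnOrder G l) {u v : V} (huv : G.Adj u v) (hdeg : (G.neighborSet v).ncard ≤ 2)
    (hprec : ∀ w, G.Adj v w → idx l w < idx l v) : GoodOrder G l := by
  classical
  intro x
  by_cases hchi : chi G ≤ 2
  · exact (hl.greedy_le_two (colorable_chi.mono hchi) x).trans (two_le_chi_of_adj huv)
  obtain rfl | hxv := eq_or_ne x v
  · calc greedy G l x ≤ (G.neighborSet x).ncard + 1 := greedyFrom_le_ncard_add_one G _ (hl.2.1 x)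
      _ ≤ chi G := by omega
  set s := Finset.univ.erase v
  have hback : NeighborsInPrecede s G l := by
    rw [NeighborsInPrecede, List.pairwise_iff_getElem]
    intro i j hi hj hij hi_out _ hadj
    obtain hv : l[i] = v := by simpa [s] using hi_out
    have := hprec _ (hv ▸ hadj)
    simp only [idx, ← hv, hl.1.idxOf_getElem] at this
    omega
  have hl' := hl.restrictOrder hback
  have : Nonempty (s : Set V) := ⟨⟨u, by simp [s, huv.ne]⟩⟩
  have hs : s ≠ Finset.univ := (Finset.erase_ssubset (Finset.mem_univ v)).ne
  exact ((hmin.2 s hs hl'.connected).goodOrder hl').greedy_le_chi_of_induce hback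
    (by simp [s, hxv])

end Chi

lemma IsFlatPath.neighborSet_eq {V : Type*} {G : SimpleGraph V} {P : List V}
    (hP : IsFlatPath G P) {i : ℕ} (hi0 : 0 < i) (hi : i + 1 < P.length) :
    G.neighborSet P[i] = {P[i - 1], P[i + 1]} := by
  have hadj : ∀ j (hj : j < P.length), G.Adj P[i] P[j] ↔ i + 1 = j ∨ j + 1 = i :=
    fun j hj => hP.1.2 ⟨i, by omega⟩ ⟨j, hj⟩
  have hdeg := hP.2 ⟨i, by omega⟩ hi0 hi
  have hne : P[i - 1] ≠ P[i + 1] := fun h => by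
    have := hP.1.1.getElem_inj_iff.mp h
    omega
  refine (Set.eq_of_subset_of_ncard_le ?_ ?_ (Set.finite_of_ncard_ne_zero ?_)).symm
  · rintro w (rfl | rfl)
    · exact (hadj (i - 1) (by omega)).mpr (by omega)
    · exact (hadj (i + 1) hi).mpr (by omega)
  · rw [Set.ncard_pair hne]
    exact hdeg.le
  · exact hdeg ▸ two_ne_zero

theorem stmt12 {V : Type*} [Fintype V] (G : SimpleGraph V) (l : List V)
    (hmin : MinimallyBad G) (hbad : BadOrder G l)
    (P : List V) (hP : IsFlatPath G P) :
    ∀ i (h : i < P.length),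
      (∀ j (hj : j < P.length), idx l (P.get ⟨j, hj⟩) ≤ idx l (P.get ⟨i, h⟩)) →
      i = 0 ∨ i + 1 = P.length := by
  classical
  intro i hi hmax
  by_contra! hend
  have hi0 : 0 < i := Nat.pos_of_ne_zero hend.1
  have hi1 : i + 1 < P.length := by omega
  have hnbr := hP.neighborSet_eq hi0 hi1
  have hlt : ∀ j (hj : j < P.length), j ≠ i → idx l P[j] < idx l P[i] := fun j hj hji =>
    (hmax j hj).lt_of_ne fun h =>
      hji (hP.1.1.getElem_inj_iff.mp ((List.idxOf_inj (hbad.1.2.1 _)).mp h))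
  have hadj : G.Adj P[i - 1] P[i] := by
    rw [SimpleGraph.adj_comm, ← SimpleGraph.mem_neighborSet, hnbr]
    exact Set.mem_insert _ _
  have hprec : ∀ w, G.Adj P[i] w → idx l w < idx l P[i] := by
    intro w hw
    rw [← SimpleGraph.mem_neighborSet, hnbr] at hw
    rcases hw with rfl | rfl
    exacts [hlt (i - 1) (by omega) (by omega), hlt (i + 1) hi1 (by omega)]
  exact hbad.2 (hmin.goodOrder_of_neighbors_precede hbad.1 hadj (hP.2 ⟨i, hi⟩ hi0 hi1).le hprec)
end

section
/- For every graph G, the following are equivalent: (1) G is P_4-free (a cograph); (2) for every induced subgraph H of G and every linear order O of V(H), the greedy colouring algorithm applied to (H,O) produces an optimal colouring of H. -/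
/-!
Greedy colourings are Grundy colourings: a vertex of colour `k` has neighbours of every colour
`1, …, k - 1`. By Seinsche's theorem a cograph on at least two vertices splits into two nonempty
parts with either no edges or all edges between them, and by induction along such splittings a
Grundy-type colouring of a cograph uses at most `χ` colours: in a disjoint union the vertex of
largest colour sees every smaller colour inside its own part, and in a join the two parts use
disjoint sets of colours while their chromatic numbers add up. Conversely, on an induced path
`a b c d` the order `a, d, b, c` makes the greedy algorithm give `c` the colour `3 > χ`.
-/

namespace SimpleGraph

variable {V : Type*} {G : SimpleGraph V}

section Cograph

def P4Free (G : SimpleGraph V) : Prop :=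
  ∀ a b c d : V, G.Adj a b → G.Adj b c → G.Adj c d →
    ¬ G.Adj a c → ¬ G.Adj a d → ¬ G.Adj b d → False

theorem P4Free.compl (h : P4Free G) : P4Free Gᶜ := by
  intro a b c d hab hbc hcd hac had hbd
  simp only [compl_adj, not_and, not_not] at *
  have hac' : a ≠ c := by rintro rfl; exact hcd.2 (had hcd.1)
  have had' : a ≠ d := by rintro rfl; exact hab.2 (hbd hab.1.symm).symm
  have hbd' : b ≠ d := by rintro rfl; exact hab.2 (had hab.1)
  -- the complement of the path `a b c d` is the path `b d a c`
  exact h b d a c (hbd hbd') (had had').symm (hac hac') (fun h => hab.2 h.symm) hbc.2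
    (fun h => hcd.2 h.symm)

theorem P4Free.induce (h : P4Free G) (s : Set V) : P4Free (G.induce s) :=
  fun a b c d => h a b c d

def IsAnticompleteBetween (G : SimpleGraph V) (s t : Set V) : Prop :=
  ∀ ⦃v₁⦄, v₁ ∈ s → ∀ ⦃v₂⦄, v₂ ∈ t → ¬ G.Adj v₁ v₂

theorem IsAnticompleteBetween.symm {s t : Set V} (h : G.IsAnticompleteBetween s t) :
    G.IsAnticompleteBetween t s :=
  fun _ h₁ _ h₂ hadj => h h₂ h₁ hadj.symm

theorem IsCompleteBetween.compl {s t : Set V} (h : G.IsCompleteBetween s t) :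
    Gᶜ.IsAnticompleteBetween s t :=
  fun _ h₁ _ h₂ hadj => hadj.2 (h h₁ h₂)

theorem IsAnticompleteBetween.compl {s t : Set V} (hst : Disjoint s t)
    (h : G.IsAnticompleteBetween s t) : Gᶜ.IsCompleteBetween s t :=
  fun _ h₁ _ h₂ => ⟨fun he => hst.ne_of_mem h₁ h₂ he, h h₁ h₂⟩

variable [DecidableEq V]

def Decomposable (G : SimpleGraph V) (s : Finset V) : Prop :=
  ∃ A B : Finset V, Disjoint A B ∧ A ∪ B = s ∧ A.Nonempty ∧ B.Nonempty ∧
    (G.IsAnticompleteBetween A B ∨ G.IsCompleteBetween A B)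

theorem Decomposable.of_compl {s : Finset V} (h : Gᶜ.Decomposable s) : G.Decomposable s := by
  obtain ⟨A, B, hAB, hs, hA, hB, hanti | hcomp⟩ := h
  · exact ⟨A, B, hAB, hs, hA, hB, Or.inr (by simpa using hanti.compl (Finset.disjoint_coe.2 hAB))⟩
  · exact ⟨A, B, hAB, hs, hA, hB, Or.inl (by simpa using hcomp.compl)⟩

theorem decomposable_of_subset {s A : Finset V} (hAs : A ⊆ s) (hA : A.Nonempty)
    (hsA : (s \ A).Nonempty)
    (h : G.IsAnticompleteBetween A ↑(s \ A) ∨ G.IsCompleteBetween A ↑(s \ A)) :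
    G.Decomposable s :=
  ⟨A, s \ A, Finset.disjoint_sdiff, Finset.union_sdiff_of_subset hAs, hA, hsA, h⟩

theorem decomposable_pair {u v : V} (huv : u ≠ v) : G.Decomposable {u, v} := by
  refine ⟨{u}, {v}, Finset.disjoint_singleton.2 huv, (Finset.insert_eq u {v}).symm,
    Finset.singleton_nonempty u, Finset.singleton_nonempty v, ?_⟩
  by_cases h : G.Adj u v
  · exact Or.inr fun x hx y hy => by simp_all
  · exact Or.inl fun x hx y hy => by simp_all

theorem decomposable_insert_of_forall_not_adj {v : V} {A B : Finset V} (hv : v ∉ A ∪ B)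
    (hA : A.Nonempty) (hAB : G.IsAnticompleteBetween A B) (hvA : ∀ a ∈ A, ¬ G.Adj v a) :
    G.Decomposable (insert v (A ∪ B)) := by
  refine decomposable_of_subset (A := A) (fun a ha => by simp [ha]) hA ⟨v, by simp_all⟩
    (Or.inl fun a ha x hx => ?_)
  simp only [Finset.mem_coe, Finset.mem_sdiff, Finset.mem_insert, Finset.mem_union] at hx
  obtain ⟨rfl | hxA | hxB, hxA'⟩ := hx
  · exact fun h => hvA a ha h.symm
  · exact absurd hxA hxA'
  · exact hAB ha hxB

theorem P4Free.decomposable_insert_of_not_adj_of_adj (hG : P4Free G) {v z b : V} {A B : Finset V}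
    (hv : v ∉ A ∪ B) (hAB : G.IsAnticompleteBetween A B) (hz : z ∈ A) (hvz : ¬ G.Adj v z)
    (hb : b ∈ B) (hvb : G.Adj v b) : G.Decomposable (insert v (A ∪ B)) := by
  classical
  refine decomposable_of_subset (A := {a ∈ A | ¬ G.Adj v a}) (fun a ha => by simp_all)
    ⟨z, by simp [hz, hvz]⟩ ⟨v, by simp_all⟩ (Or.inl fun x hx y hy hxy => ?_)
  simp only [Finset.mem_coe, Finset.mem_sdiff, Finset.mem_insert, Finset.mem_union,
    Finset.mem_filter, not_and, not_not] at hx hy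
  obtain ⟨rfl | hyA | hyB, hy⟩ := hy
  · exact hx.2 hxy.symm
  -- otherwise `b v y x` would be an induced path
  · exact hG b v y x hvb.symm (hy hyA) hxy.symm (fun h => hAB hyA hb h.symm)
      (fun h => hAB hx.1 hb h.symm) hx.2
  · exact hAB hx.1 hyB hxy

theorem P4Free.decomposable_insert (hG : P4Free G) {v : V} {A B : Finset V} (hv : v ∉ A ∪ B)
    (hA : A.Nonempty) (hB : B.Nonempty) (hAB : G.IsAnticompleteBetween A B) :
    G.Decomposable (insert v (A ∪ B)) := by
  by_cases hvA : ∀ a ∈ A, ¬ G.Adj v a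
  · exact decomposable_insert_of_forall_not_adj hv hA hAB hvA
  by_cases hvB : ∀ b ∈ B, ¬ G.Adj v b
  · rw [Finset.union_comm] at hv ⊢
    exact decomposable_insert_of_forall_not_adj hv hB hAB.symm hvB
  push Not at hvA hvB
  obtain ⟨a, ha, hva⟩ := hvA
  obtain ⟨b, hb, hvb⟩ := hvB
  by_cases hvAB : ∀ x ∈ A ∪ B, G.Adj v x
  · refine ⟨{v}, A ∪ B, Finset.disjoint_singleton_left.2 hv, (Finset.insert_eq v _).symm,
      Finset.singleton_nonempty v, ⟨a, Finset.mem_union_left B ha⟩, Or.inr fun x hx y hy => ?_⟩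
    rw [Finset.coe_singleton, Set.mem_singleton_iff] at hx
    exact hx ▸ hvAB y hy
  push Not at hvAB
  obtain ⟨z, hz, hvz⟩ := hvAB
  rcases Finset.mem_union.1 hz with hzA | hzB
  · exact hG.decomposable_insert_of_not_adj_of_adj hv hAB hzA hvz hb hvb
  · rw [Finset.union_comm] at hv ⊢
    exact hG.decomposable_insert_of_not_adj_of_adj hv hAB.symm hzB hvz ha hva

theorem P4Free.decomposable (hG : P4Free G) {s : Finset V} (hs : 1 < s.card) :
    G.Decomposable s := by
  induction s using Finset.induction_on with
  | empty => simp at hs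
  | insert v t hvt ih =>
    rw [Finset.card_insert_of_notMem hvt] at hs
    rcases Nat.lt_or_ge 1 t.card with ht | ht
    · obtain ⟨A, B, -, rfl, hA, hB, hanti | hcomp⟩ := ih ht
      · exact hG.decomposable_insert hvt hA hB hanti
      · exact (hG.compl.decomposable_insert hvt hA hB hcomp.compl).of_compl
    · obtain ⟨u, rfl⟩ := Finset.card_eq_one.1 (by omega : t.card = 1)
      exact decomposable_pair fun h => hvt (by simp [h])

end Cograph

theorem colorable_chi [Fintype V] (G : SimpleGraph V) : G.Colorable (chi G) :=
  Nat.sInf_mem (s := {n | G.Colorable n}) ⟨_, G.colorable_of_fintype⟩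

theorem chi_le_of_colorable [Fintype V] {n : ℕ} (h : G.Colorable n) : chi G ≤ n :=
  Nat.sInf_le h

theorem chi_le_of_hom {V' : Type*} [Fintype V] [Fintype V'] {G' : SimpleGraph V'} (f : G →g G') :
    chi G ≤ chi G' :=
  chi_le_of_colorable ((colorable_chi G').of_hom f)

theorem chi_induce_mono {A s : Finset V} (h : A ⊆ s) :
    chi (G.induce (A : Set V)) ≤ chi (G.induce (s : Set V)) :=
  chi_le_of_hom (G.induceHomOfLE (Finset.coe_subset.2 h)).toHom

def ProperOn (G : SimpleGraph V) (s : Finset V) (c : V → ℕ) : Prop :=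
  ∀ u ∈ s, ∀ v ∈ s, G.Adj u v → c u ≠ c v

theorem ProperOn.mono {A s : Finset V} {c : V → ℕ} (h : G.ProperOn s c) (hAs : A ⊆ s) :
    G.ProperOn A c :=
  fun u hu v hv => h u (hAs hu) v (hAs hv)

theorem chi_induce_le_card_image {s : Finset V} {c : V → ℕ} (hc : G.ProperOn s c) :
    chi (G.induce (s : Set V)) ≤ (s.image c).card := by
  let C : (G.induce (s : Set V)).Coloring (s.image c) :=
    Coloring.mk (fun v => ⟨c v, Finset.mem_image_of_mem c v.2⟩)
      fun {u v} huv he => hc u u.2 v v.2 huv (congrArg Subtype.val he)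
  simpa using chi_le_of_colorable C.colorable

theorem exists_properOn_card_image_le (G : SimpleGraph V) (s : Finset V) :
    ∃ c : V → ℕ, G.ProperOn s c ∧ (s.image c).card ≤ chi (G.induce (s : Set V)) := by
  classical
  obtain ⟨C, hC⟩ :=
    (colorable_iff_exists_bdd_nat_coloring _).1 (colorable_chi (G.induce (s : Set V)))
  refine ⟨fun v => if h : v ∈ s then C ⟨v, h⟩ else 0, fun u hu v hv huv => ?_, ?_⟩
  · simpa [hu, hv] using C.valid (show (G.induce (s : Set V)).Adj ⟨u, hu⟩ ⟨v, hv⟩ from huv)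
  · refine (Finset.card_le_card fun k hk => ?_).trans (Finset.card_range _).le
    obtain ⟨v, hv, rfl⟩ := Finset.mem_image.1 hk
    simpa [hv] using hC ⟨v, hv⟩

theorem chi_induce_add_le_of_isCompleteBetween [DecidableEq V] {A B : Finset V}
    (h : G.IsCompleteBetween A B) :
    chi (G.induce (A : Set V)) + chi (G.induce (B : Set V)) ≤ chi (G.induce ↑(A ∪ B)) := by
  obtain ⟨c, hc, hcard⟩ := G.exists_properOn_card_image_le (A ∪ B)
  have hdisj : Disjoint (A.image c) (B.image c) := by
    refine Finset.disjoint_left.2 fun k hkA hkB => ?_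
    obtain ⟨a, ha, rfl⟩ := Finset.mem_image.1 hkA
    obtain ⟨b, hb, hba⟩ := Finset.mem_image.1 hkB
    exact hc a (Finset.mem_union_left B ha) b (Finset.mem_union_right A hb) (h ha hb) hba.symm
  calc chi (G.induce (A : Set V)) + chi (G.induce (B : Set V))
      ≤ (A.image c).card + (B.image c).card :=
        add_le_add (chi_induce_le_card_image (hc.mono Finset.subset_union_left))
          (chi_induce_le_card_image (hc.mono Finset.subset_union_right))
    _ = ((A ∪ B).image c).card := by rw [Finset.image_union, Finset.card_union_of_disjoint hdisj]
    _ ≤ _ := hcard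

theorem chi_induce_le_two [DecidableEq V] {a b c d : V} (hac : ¬ G.Adj a c) (hbd : ¬ G.Adj b d) :
    chi (G.induce (({a, b, c, d} : Finset V) : Set V)) ≤ 2 := by
  let col : V → ℕ := fun x => if x = a ∨ x = c then 0 else 1
  have hcol : G.ProperOn {a, b, c, d} col := by
    intro u hu v hv huv heq
    simp only [Finset.mem_insert, Finset.mem_singleton] at hu hv
    simp only [col] at heq
    split_ifs at heq with hu' hv' hv'
    · rcases hu' with rfl | rfl <;> rcases hv' with rfl | rfl <;> simp_all [adj_comm]
    · rcases hu with rfl | rfl | rfl | rfl <;> rcases hv with rfl | rfl | rfl | rfl <;>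
        simp_all [adj_comm]
  refine (chi_induce_le_card_image hcol).trans ((Finset.card_le_card ?_).trans
    (Finset.card_le_two (a := 0) (b := 1)))
  intro k hk
  obtain ⟨x, -, rfl⟩ := Finset.mem_image.1 hk
  by_cases hx : x = a ∨ x = c <;> simp [col, hx]

/-- Only the colours actually used on `s` have to be seen, so that the property passes to each side
of a join, whose colours need not form an initial segment. -/
def IsGrundyOn (G : SimpleGraph V) (s : Finset V) (c : V → ℕ) : Prop :=
  G.ProperOn s c ∧ ∀ v ∈ s, ∀ w ∈ s, c w < c v → ∃ u ∈ s, G.Adj v u ∧ c u = c w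

section Grundy

variable {A B : Finset V} {c : V → ℕ}

theorem IsGrundyOn.mono {s : Finset V} (h : G.IsGrundyOn s c) (hAs : A ⊆ s)
    (hclosed : ∀ v ∈ A, ∀ w ∈ A, ∀ u ∈ s, G.Adj v u → c u = c w → u ∈ A) : G.IsGrundyOn A c := by
  refine ⟨h.1.mono hAs, fun v hv w hw hlt => ?_⟩
  obtain ⟨u, hu, hvu, hcu⟩ := h.2 v (hAs hv) w (hAs hw) hlt
  exact ⟨u, hclosed v hv w hw u hu hvu hcu, hvu, hcu⟩

theorem card_image_le_chi_of_card_le_one {s : Finset V} (hs : s.card ≤ 1) (c : V → ℕ) :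
    (s.image c).card ≤ chi (G.induce (s : Set V)) := by
  obtain ⟨c', -, hc'⟩ := G.exists_properOn_card_image_le s
  rcases s.eq_empty_or_nonempty with rfl | hne
  · simp
  calc (s.image c).card ≤ s.card := Finset.card_image_le
    _ ≤ (s.image c').card := hs.trans (Finset.card_pos.2 (hne.image c'))
    _ ≤ _ := hc'

variable [DecidableEq V]

theorem IsGrundyOn.of_isAnticompleteBetween (h : G.IsGrundyOn (A ∪ B) c)
    (hAB : G.IsAnticompleteBetween A B) : G.IsGrundyOn A c :=
  h.mono Finset.subset_union_left fun _ hv _ _ _ hu hvu _ =>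
    (Finset.mem_union.1 hu).resolve_right fun huB => hAB hv huB hvu

theorem IsGrundyOn.of_isCompleteBetween (h : G.IsGrundyOn (A ∪ B) c)
    (hAB : G.IsCompleteBetween A B) : G.IsGrundyOn A c :=
  h.mono Finset.subset_union_left fun _ _ w hw u hu _ hcu =>
    (Finset.mem_union.1 hu).resolve_right fun huB =>
      h.1 w (Finset.mem_union_left B hw) u (Finset.mem_union_right A huB) (hAB hw huB) hcu.symm

theorem IsGrundyOn.image_subset_of_isAnticompleteBetween (h : G.IsGrundyOn (A ∪ B) c)
    (hAB : G.IsAnticompleteBetween A B) {v : V} (hv : v ∈ A) (hmax : ∀ w ∈ A ∪ B, c w ≤ c v) :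
    (A ∪ B).image c ⊆ A.image c := by
  intro k hk
  obtain ⟨w, hw, rfl⟩ := Finset.mem_image.1 hk
  rcases (hmax w hw).lt_or_eq with hlt | heq
  · obtain ⟨u, hu, hvu, hcu⟩ := h.2 v (Finset.mem_union_left B hv) w hw hlt
    refine Finset.mem_image.2 ⟨u, ?_, hcu⟩
    exact (Finset.mem_union.1 hu).resolve_right fun huB => hAB hv huB hvu
  · exact Finset.mem_image.2 ⟨v, hv, heq.symm⟩

theorem IsGrundyOn.card_image_le_max_of_isAnticompleteBetween (h : G.IsGrundyOn (A ∪ B) c)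
    (hAB : G.IsAnticompleteBetween A B) (hne : (A ∪ B).Nonempty) :
    ((A ∪ B).image c).card ≤ max (A.image c).card (B.image c).card := by
  obtain ⟨v, hv, hmax⟩ := (A ∪ B).exists_max_image c hne
  rcases Finset.mem_union.1 hv with hvA | hvB
  · exact le_max_of_le_left
      (Finset.card_le_card (h.image_subset_of_isAnticompleteBetween hAB hvA hmax))
  · rw [Finset.union_comm] at h hmax ⊢
    exact le_max_of_le_right
      (Finset.card_le_card (h.image_subset_of_isAnticompleteBetween hAB.symm hvB hmax))

theorem P4Free.card_image_le_chi (hG : G.P4Free) {s : Finset V} (hc : G.IsGrundyOn s c) :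
    (s.image c).card ≤ chi (G.induce (s : Set V)) := by
  induction s using Finset.strongInduction with
  | H s ih =>
    rcases le_or_gt s.card 1 with hs | hs
    · exact card_image_le_chi_of_card_le_one hs c
    obtain ⟨A, B, hAB, rfl, ⟨a, ha⟩, ⟨b, hb⟩, hsplit⟩ := hG.decomposable hs
    have hA : A ⊂ A ∪ B := (Finset.ssubset_iff_of_subset Finset.subset_union_left).2
      ⟨b, Finset.mem_union_right A hb, Finset.disjoint_right.1 hAB hb⟩
    have hB : B ⊂ A ∪ B := (Finset.ssubset_iff_of_subset Finset.subset_union_right).2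
      ⟨a, Finset.mem_union_left B ha, Finset.disjoint_left.1 hAB ha⟩
    have hc' : G.IsGrundyOn (B ∪ A) c := Finset.union_comm A B ▸ hc
    rcases hsplit with hanti | hcomp
    · calc ((A ∪ B).image c).card ≤ max (A.image c).card (B.image c).card :=
            hc.card_image_le_max_of_isAnticompleteBetween hanti ⟨a, Finset.mem_union_left B ha⟩
        _ ≤ max (chi (G.induce (A : Set V))) (chi (G.induce (B : Set V))) :=
            max_le_max (ih A hA (hc.of_isAnticompleteBetween hanti))
              (ih B hB (hc'.of_isAnticompleteBetween hanti.symm))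
        _ ≤ _ := max_le (chi_induce_mono hA.subset) (chi_induce_mono hB.subset)
    · calc ((A ∪ B).image c).card ≤ (A.image c).card + (B.image c).card := by
            rw [Finset.image_union]
            exact Finset.card_union_le _ _
        _ ≤ chi (G.induce (A : Set V)) + chi (G.induce (B : Set V)) :=
            add_le_add (ih A hA (hc.of_isCompleteBetween hcomp))
              (ih B hB (hc'.of_isCompleteBetween hcomp.symm))
        _ ≤ _ := chi_induce_add_le_of_isCompleteBetween hcomp

end Grundy

/-- `f v = 0` means that `v` is not coloured yet. -/
def IsPartialGrundy (G : SimpleGraph V) (f : V → ℕ) : Prop :=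
  (∀ u v, G.Adj u v → f u ≠ 0 → f u ≠ f v) ∧
    ∀ u m, 1 ≤ m → m < f u → ∃ w, G.Adj u w ∧ f w = m

noncomputable def firstFree (G : SimpleGraph V) (f : V → ℕ) (v : V) : ℕ :=
  sInf {k : ℕ | 1 ≤ k ∧ ∀ w, G.Adj v w → f w ≠ k}

theorem firstFree_le {f : V → ℕ} {v : V} {k : ℕ} (hk : 1 ≤ k) (h : ∀ w, G.Adj v w → f w ≠ k) :
    firstFree G f v ≤ k :=
  Nat.sInf_le ⟨hk, h⟩

theorem firstFree_mem [Finite V] (f : V → ℕ) (v : V) :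
    1 ≤ firstFree G f v ∧ ∀ w, G.Adj v w → f w ≠ firstFree G f v := by
  obtain ⟨M, hM⟩ := (Set.finite_range f).bddAbove
  refine Nat.sInf_mem (s := {k : ℕ | 1 ≤ k ∧ ∀ w, G.Adj v w → f w ≠ k})
    ⟨M + 1, by omega, fun w _ hw => ?_⟩
  have := hM (Set.mem_range_self w)
  omega

theorem exists_adj_eq_of_lt_firstFree {f : V → ℕ} {v : V} {m : ℕ} (hm : 1 ≤ m)
    (hlt : m < firstFree G f v) : ∃ w, G.Adj v w ∧ f w = m := by
  by_contra! h
  exact Nat.notMem_of_lt_sInf hlt ⟨hm, h⟩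

theorem greedyStep_self (f : V → ℕ) (v : V) : greedyStep G f v v = firstFree G f v :=
  if_pos rfl

theorem greedyStep_of_ne (f : V → ℕ) {u v : V} (h : u ≠ v) : greedyStep G f v u = f u :=
  if_neg h

theorem greedyFrom_of_notMem {f : V → ℕ} {l : List V} {u : V} (hu : u ∉ l) :
    greedyFrom G f l u = f u := by
  induction l generalizing f with
  | nil => rfl
  | cons a l ih =>
    rw [List.mem_cons, not_or] at hu
    exact (ih hu.2).trans (greedyStep_of_ne f hu.1)

theorem greedyFrom_ne_zero [Finite V] {f : V → ℕ} {l : List V} {u : V} (hu : u ∈ l ∨ f u ≠ 0) :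
    greedyFrom G f l u ≠ 0 := by
  induction l generalizing f with
  | nil => simpa [greedyFrom] using hu
  | cons a l ih =>
    apply ih
    by_cases hua : u = a
    · subst hua
      rw [greedyStep_self]
      exact Or.inr (Nat.one_le_iff_ne_zero.1 (firstFree_mem f u).1)
    · rw [greedyStep_of_ne f hua]
      simpa [hua] using hu

theorem IsPartialGrundy.greedyStep [Finite V] {f : V → ℕ} (hf : G.IsPartialGrundy f) {v : V}
    (hv : f v = 0) : G.IsPartialGrundy (greedyStep G f v) := by
  obtain ⟨hpos, hfree⟩ := firstFree_mem (G := G) f v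
  constructor
  · intro u w huw hu
    by_cases hwv : w = v
    · subst hwv
      rw [greedyStep_self, greedyStep_of_ne f huw.ne]
      exact hfree u huw.symm
    rw [greedyStep_of_ne f hwv]
    by_cases huv : u = v
    · subst huv
      rw [greedyStep_self]
      exact (hfree w huw).symm
    · rw [greedyStep_of_ne f huv] at hu ⊢
      exact hf.1 u w huw hu
  · intro u m hm hlt
    -- a witness of a positive colour was coloured before `v`, so it is not `v`
    suffices ∃ w, G.Adj u w ∧ f w = m by
      obtain ⟨w, huw, hw⟩ := this
      have hwv : w ≠ v := by rintro rfl; omega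
      exact ⟨w, huw, by rw [greedyStep_of_ne f hwv, hw]⟩
    by_cases huv : u = v
    · subst huv
      rw [greedyStep_self] at hlt
      exact exists_adj_eq_of_lt_firstFree hm hlt
    · rw [greedyStep_of_ne f huv] at hlt
      exact hf.2 u m hm hlt

theorem IsPartialGrundy.greedyFrom [Finite V] {f : V → ℕ} (hf : G.IsPartialGrundy f)
    {l : List V} (hl : l.Nodup) (hzero : ∀ u ∈ l, f u = 0) :
    G.IsPartialGrundy (greedyFrom G f l) := by
  induction l generalizing f with
  | nil => exact hf
  | cons a l ih =>
    rw [List.nodup_cons] at hl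
    refine ih (hf.greedyStep (hzero a List.mem_cons_self)) hl.2 fun u hu => ?_
    have hua : u ≠ a := by rintro rfl; exact hl.1 hu
    rw [greedyStep_of_ne f hua]
    exact hzero u (List.mem_cons_of_mem a hu)

theorem isPartialGrundy_greedy [Finite V] {l : List V} (hl : l.Nodup) :
    G.IsPartialGrundy (greedy G l) :=
  IsPartialGrundy.greedyFrom ⟨fun _ _ _ h => absurd rfl h, fun _ _ _ h => by omega⟩ hl
    fun _ _ => rfl

theorem IsPartialGrundy.isGrundyOn_univ [Fintype V] {f : V → ℕ} (hf : G.IsPartialGrundy f)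
    (hpos : ∀ v, f v ≠ 0) : G.IsGrundyOn Finset.univ f := by
  refine ⟨fun u _ v _ huv => hf.1 u v huv (hpos u), fun v _ w _ hlt => ?_⟩
  obtain ⟨u, hvu, hu⟩ := hf.2 v (f w) (Nat.one_le_iff_ne_zero.2 (hpos w)) hlt
  exact ⟨u, Finset.mem_univ u, hvu, hu⟩

theorem IsPartialGrundy.le_card_image [Fintype V] {f : V → ℕ} (hf : G.IsPartialGrundy f)
    (v : V) : f v ≤ (Finset.univ.image f).card := by
  calc f v = (Finset.Icc 1 (f v)).card := by simp
    _ ≤ _ := Finset.card_le_card fun m hm => ?_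
  obtain ⟨h1, h2⟩ := Finset.mem_Icc.1 hm
  rcases h2.lt_or_eq with hlt | rfl
  · obtain ⟨w, -, hw⟩ := hf.2 v m h1 hlt
    exact Finset.mem_image.2 ⟨w, Finset.mem_univ w, hw⟩
  · exact Finset.mem_image.2 ⟨v, Finset.mem_univ v, rfl⟩

theorem P4Free.greedy_le_chi [Fintype V] (hG : G.P4Free) {l : List V} (hl : l.Nodup)
    (hmem : ∀ v, v ∈ l) (v : V) : greedy G l v ≤ chi G := by
  classical
  have hf : G.IsPartialGrundy (greedy G l) := isPartialGrundy_greedy hl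
  have hpos : ∀ u, greedy G l u ≠ 0 := fun u => greedyFrom_ne_zero (Or.inl (hmem u))
  calc greedy G l v ≤ (Finset.univ.image (greedy G l)).card := hf.le_card_image v
    _ ≤ chi (G.induce ((Finset.univ : Finset V) : Set V)) :=
        hG.card_image_le_chi (hf.isGrundyOn_univ hpos)
    _ ≤ chi G := chi_le_of_hom (Embedding.induce _).toHom

theorem greedy_append_of_notMem {l₁ l₂ : List V} {w : V} (hw : w ∉ l₂) :
    greedy G (l₁ ++ l₂) w = greedy G l₁ w := by
  rw [greedy, greedyFrom, List.foldl_append]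
  exact greedyFrom_of_notMem hw

theorem greedy_append_cons_le {l₁ l₂ : List V} {v : V} (hv : v ∉ l₂) {k : ℕ} (hk : 1 ≤ k)
    (hfree : ∀ w, G.Adj v w → greedy G l₁ w ≠ k) : greedy G (l₁ ++ v :: l₂) v ≤ k := by
  have hstep : greedy G (l₁ ++ v :: l₂) v = greedyStep G (greedy G l₁) v v := by
    rw [greedy, greedyFrom, List.foldl_append, List.foldl_cons]
    exact greedyFrom_of_notMem hv
  rw [hstep, greedyStep_self]
  exact firstFree_le hk hfree

section InducedPath

variable {a b c d : V}

theorem nodup_of_induced_path (hab : G.Adj a b) (hbc : G.Adj b c) (hcd : G.Adj c d)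
    (hac : ¬ G.Adj a c) (had : ¬ G.Adj a d) (hbd : ¬ G.Adj b d) : [a, d, b, c].Nodup := by
  have hac' : a ≠ c := by rintro rfl; exact had hcd
  have had' : a ≠ d := by rintro rfl; exact hbd hab.symm
  have hbd' : b ≠ d := by rintro rfl; exact had hab
  simp [hab.ne, hbc.ne, hac', had', hbd'.symm, hcd.ne.symm]

theorem three_le_greedy_of_induced_path [Finite V] (hab : G.Adj a b) (hbc : G.Adj b c)
    (hcd : G.Adj c d) (hac : ¬ G.Adj a c) (had : ¬ G.Adj a d) (hbd : ¬ G.Adj b d) :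
    3 ≤ greedy G [a, d, b, c] c := by
  have hnd := nodup_of_induced_path hab hbc hcd hac had hbd
  set F := greedy G [a, d, b, c]
  have hF : G.IsPartialGrundy F := isPartialGrundy_greedy hnd
  simp only [List.nodup_cons] at hnd
  obtain ⟨ha, hd, hb, -⟩ := hnd
  have hpos : ∀ u ∈ [a, d, b, c], F u ≠ 0 := fun u hu => greedyFrom_ne_zero (Or.inl hu)
  -- `a, d, b` get the colours `1, 1, 2`, and `c` must avoid those of `b` and `d`
  have hFa : F a ≤ 1 := greedy_append_cons_le (l₁ := []) ha le_rfl
    fun w _ => by simp [greedy, greedyFrom]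
  have hFd : F d ≤ 1 := greedy_append_cons_le (l₁ := [a]) hd le_rfl fun w hdw => by
    have hwa : w ≠ a := by rintro rfl; exact had hdw.symm
    rw [greedy, greedyFrom_of_notMem (by simpa using hwa)]
    simp
  have hFb : F b ≤ 2 := greedy_append_cons_le (l₁ := [a, d]) hb (by norm_num) fun w hbw => by
    by_cases hwa : w = a
    · subst hwa
      rw [← greedy_append_of_notMem (l₂ := [b, c]) (fun h => ha (List.mem_cons_of_mem d h))]
      exact (hFa.trans_lt one_lt_two).ne
    have hwd : w ≠ d := by rintro rfl; exact hbd hbw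
    rw [greedy, greedyFrom_of_notMem (by simp [hwa, hwd])]
    simp
  have := hF.1 b a hab.symm (hpos b (by simp))
  have := hF.1 c b hbc.symm (hpos c (by simp))
  have := hF.1 c d hcd (hpos c (by simp))
  have := hpos a (by simp)
  have := hpos b (by simp)
  have := hpos c (by simp)
  have := hpos d (by simp)
  omega

theorem exists_chi_lt_greedy_of_induced_path (hab : G.Adj a b) (hbc : G.Adj b c)
    (hcd : G.Adj c d) (hac : ¬ G.Adj a c) (had : ¬ G.Adj a d) (hbd : ¬ G.Adj b d) :
    ∃ (s : Finset V) (l : List (s : Set V)), l.Nodup ∧ (∀ v, v ∈ l) ∧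
      ∃ v, chi (G.induce (s : Set V)) < greedy (G.induce (s : Set V)) l v := by
  classical
  set s : Finset V := {a, b, c, d}
  let a' : (s : Set V) := ⟨a, by simp [s]⟩
  let b' : (s : Set V) := ⟨b, by simp [s]⟩
  let c' : (s : Set V) := ⟨c, by simp [s]⟩
  let d' : (s : Set V) := ⟨d, by simp [s]⟩
  refine ⟨s, [a', d', b', c'], ?_, ?_, c', ?_⟩
  · exact List.Nodup.of_map Subtype.val (l := [a', d', b', c'])
      (nodup_of_induced_path hab hbc hcd hac had hbd)
  · rintro ⟨x, hx⟩
    simp only [s, Finset.coe_insert, Finset.coe_singleton, Set.mem_insert_iff,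
      Set.mem_singleton_iff] at hx
    rcases hx with rfl | rfl | rfl | rfl <;> simp [a', b', c', d']
  · calc chi (G.induce (s : Set V)) ≤ 2 := chi_induce_le_two hac hbd
      _ < _ := three_le_greedy_of_induced_path (G := G.induce (s : Set V)) (a := a') (b := b')
          (c := c') (d := d') hab hbc hcd hac had hbd

end InducedPath

end SimpleGraph

theorem stmt16_general {V : Type*} (G : SimpleGraph V) :
    (∀ a b c d : V, G.Adj a b → G.Adj b c → G.Adj c d →
      ¬ G.Adj a c → ¬ G.Adj a d → ¬ G.Adj b d → False) ↔
    (∀ s : Finset V, ∀ l : List ↥(↑s : Set V), l.Nodup → (∀ v, v ∈ l) →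
      ∀ v, greedy (G.induce (↑s : Set V)) l v ≤ chi (G.induce (↑s : Set V))) := by
  constructor
  · intro hG s l hl hmem v
    exact (SimpleGraph.P4Free.induce hG _).greedy_le_chi hl hmem v
  · intro h a b c d hab hbc hcd hac had hbd
    obtain ⟨s, l, hl, hmem, v, hlt⟩ :=
      SimpleGraph.exists_chi_lt_greedy_of_induced_path hab hbc hcd hac had hbd
    exact (h s l hl hmem v).not_gt hlt

theorem stmt16 {V : Type*} [Fintype V] (G : SimpleGraph V) :
    (∀ a b c d : V, G.Adj a b → G.Adj b c → G.Adj c d →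
      ¬ G.Adj a c → ¬ G.Adj a d → ¬ G.Adj b d → False) ↔
    (∀ s : Finset V, ∀ l : List ↥(↑s : Set V), l.Nodup → (∀ v, v ∈ l) →
      ∀ v, greedy (G.induce (↑s : Set V)) l v ≤ chi (G.induce (↑s : Set V))) :=
  stmt16_general G
end

section
/- Every gem-free chordal graph is distance-hereditary: if G is chordal and has no induced gem, then for every connected induced subgraph H of G and every pair of vertices u, v of H, the distance between u and v in H equals the distance between u and v in G. -/
/-!
In a chordal gem-free graph every induced path is a shortest path; a shortest path of an
induced subgraph is an induced path of `G`, so distances are inherited.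

For an induced path `u = p 0, …, p n = v` induct on `d = dist u v`, taking a neighbour `m` of
`v` with `dist u m = d - 1`. If `m` lies on the path it is `p (n - 1)`. Otherwise the
neighbours of `m` on the path form a final segment `p l, …, p n`, since a gap would close a
hole through `m`; this segment has at most three vertices, since four of them would span a gem
with `m`. So `p 0, …, p l, m` is an induced path to `m`, and induction gives
`n ≤ l + 2 = d`.
-/

theorem Set.InjOn.update_Iic {V : Type*} {p : ℕ → V} {n : ℕ} (hp : Set.InjOn p (Set.Iic n))
    {m : V} (hm : ∀ i ≤ n, p i ≠ m) :
    Set.InjOn (Function.update p (n + 1) m) (Set.Iic (n + 1)) := by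
  have heq : Set.EqOn (Function.update p (n + 1) m) p (Set.Iic n) :=
    fun i hi ↦ Function.update_of_ne (by simp at hi; omega) _ _
  rw [← Order.succ_eq_add_one, Order.Iic_succ, Set.injOn_insert (by simp),
    Order.succ_eq_add_one, heq.injOn_iff, heq.image_eq]
  simpa using ⟨hp, fun i hi ↦ hm i hi⟩

namespace SimpleGraph

variable {V : Type*} {G : SimpleGraph V}

theorem isHole_map_range {c : ℕ → V} {n : ℕ} (hn : 4 ≤ n) (hinj : Set.InjOn c (Set.Iio n))
    (hadj : ∀ i < n, ∀ j < n,
      G.Adj (c i) (c j) ↔ i + 1 = j ∨ j + 1 = i ∨ i + 1 = j + n ∨ j + 1 = i + n) :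
    IsHole G ((List.range n).map c) := by
  have hsucc : ∀ i < n, ∀ j < n, (i + 1) % n = j ↔ i + 1 = j ∨ i + 1 = j + n := by
    intro i hi j hj
    rcases (show i + 1 < n ∨ i + 1 = n by omega) with h | h
    · rw [Nat.mod_eq_of_lt h]; omega
    · rw [h, Nat.mod_self]; omega
  refine ⟨by simpa using hn, (List.nodup_map_iff_inj_on List.nodup_range).mpr ?_, ?_⟩
  · exact fun i hi j hj ↦ hinj (by simpa using hi) (by simpa using hj)
  · intro ⟨i, hi⟩ ⟨j, hj⟩
    simp only [List.length_map, List.length_range] at hi hj ⊢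
    simp only [List.get_eq_getElem, List.getElem_map, List.getElem_range]
    rw [hadj i hi j hj, hsucc i hi j hj, hsucc j hj i hi]
    omega

theorem Walk.dist_getVert_of_length_eq_dist {u v : V} {w : G.Walk u v}
    (hw : w.length = G.dist u v) {i : ℕ} (hi : i ≤ w.length) : G.dist u (w.getVert i) = i := by
  rw [← length_eq_dist_of_subwalk hw (w.isSubwalk_take i), Walk.take_length]
  omega

theorem exists_adj_dist_eq_of_dist_eq_add_one {u v : V} {d : ℕ} (h : G.dist u v = d + 1) :
    ∃ m, G.Adj m v ∧ G.dist u m = d := by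
  have hr : G.Reachable u v := Reachable.of_dist_ne_zero (by omega)
  obtain ⟨w, hw⟩ := hr.exists_walk_length_eq_dist
  refine ⟨w.getVert d, ?_, w.dist_getVert_of_length_eq_dist hw (by omega)⟩
  simpa [show d + 1 = w.length by omega] using w.adj_getVert_succ (i := d) (by omega)

/-- `p 0, …, p n` is an induced path; indexing by `ℕ` rather than by a list keeps prefixes,
segments and extensions free of bound proofs. -/
structure IsInducedPathOn (G : SimpleGraph V) (p : ℕ → V) (n : ℕ) : Prop where
  injOn : Set.InjOn p (Set.Iic n)
  adj_iff : ∀ i ≤ n, ∀ j ≤ n, G.Adj (p i) (p j) ↔ i + 1 = j ∨ j + 1 = i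

namespace IsInducedPathOn

variable {p : ℕ → V} {n : ℕ}

theorem mono (hp : G.IsInducedPathOn p n) {k : ℕ} (hk : k ≤ n) : G.IsInducedPathOn p k where
  injOn := hp.injOn.mono (Set.Iic_subset_Iic.mpr hk)
  adj_iff i hi j hj := hp.adj_iff i (hi.trans hk) j (hj.trans hk)

theorem comp_add (hp : G.IsInducedPathOn p n) {a k : ℕ} (hk : a + k ≤ n) :
    G.IsInducedPathOn (fun i ↦ p (a + i)) k where
  injOn i hi j hj hij := by
    have := hp.injOn (show a + i ≤ n by simp at hi; omega) (show a + j ≤ n by simp at hj; omega) hij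
    omega
  adj_iff i hi j hj := by rw [hp.adj_iff _ (by omega) _ (by omega)]; omega

theorem map {W : Type*} {G' : SimpleGraph W} (hp : G.IsInducedPathOn p n) (f : G ↪g G') :
    G'.IsInducedPathOn (f ∘ p) n where
  injOn := f.injective.comp_injOn hp.injOn
  adj_iff i hi j hj := by simpa using hp.adj_iff i hi j hj

theorem update (hp : G.IsInducedPathOn p n) {m : V} (hm : ∀ i ≤ n, p i ≠ m)
    (hadj : ∀ i ≤ n, G.Adj (p i) m ↔ i = n) :
    G.IsInducedPathOn (Function.update p (n + 1) m) (n + 1) where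
  injOn := hp.injOn.update_Iic hm
  adj_iff i hi j hj := by
    have hupd : ∀ i ≤ n, Function.update p (n + 1) m i = p i :=
      fun i hi ↦ Function.update_of_ne (by omega) _ _
    rcases hi.lt_or_eq with hi | rfl <;> rcases hj.lt_or_eq with hj | rfl
    · rw [hupd i (by omega), hupd j (by omega), hp.adj_iff i (by omega) j (by omega)]
    · rw [hupd i (by omega), Function.update_self, hadj i (by omega)]
      omega
    · rw [hupd j (by omega), Function.update_self, adj_comm, hadj j (by omega)]
      omega
    · simp

theorem exists_walk (hp : G.IsInducedPathOn p n) : ∃ w : G.Walk (p 0) (p n), w.length = n := by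
  induction n with
  | zero => exact ⟨.nil, rfl⟩
  | succ n ih =>
    obtain ⟨w, hw⟩ := ih (hp.mono n.le_succ)
    exact ⟨w.concat ((hp.adj_iff n (by omega) (n + 1) le_rfl).mpr (by omega)), by simp [hw]⟩

theorem reachable (hp : G.IsInducedPathOn p n) : G.Reachable (p 0) (p n) :=
  let ⟨w, _⟩ := hp.exists_walk; ⟨w⟩

theorem dist_le (hp : G.IsInducedPathOn p n) : G.dist (p 0) (p n) ≤ n :=
  let ⟨w, hw⟩ := hp.exists_walk; (SimpleGraph.dist_le w).trans hw.le

theorem isHole_update (hp : G.IsInducedPathOn p n) (hn : 2 ≤ n) {m : V}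
    (hm : ∀ i ≤ n, p i ≠ m) (hadj : ∀ i ≤ n, G.Adj (p i) m ↔ i = 0 ∨ i = n) :
    IsHole G ((List.range (n + 2)).map (Function.update p (n + 1) m)) := by
  have hupd : ∀ i ≤ n, Function.update p (n + 1) m i = p i :=
    fun i hi ↦ Function.update_of_ne (by omega) _ _
  refine isHole_map_range (by omega)
    ((hp.injOn.update_Iic hm).mono fun i hi ↦ by simp at hi ⊢; omega) ?_
  intro i hi j hj
  rcases Nat.lt_succ_iff_lt_or_eq.mp hi with hi | rfl <;>
    rcases Nat.lt_succ_iff_lt_or_eq.mp hj with hj | rfl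
  · rw [hupd i (by omega), hupd j (by omega), hp.adj_iff i (by omega) j (by omega)]
    omega
  · rw [hupd i (by omega), Function.update_self, hadj i (by omega)]
    omega
  · rw [hupd j (by omega), Function.update_self, adj_comm, hadj j (by omega)]
    omega
  · simp

theorem adj_of_le_of_le (hC : ∀ C : List V, ¬ IsHole G C) (hp : G.IsInducedPathOn p n)
    {m : V} (hm : ∀ i ≤ n, p i ≠ m) {a b : ℕ} (hbn : b ≤ n)
    (ha : G.Adj (p a) m) (hb : G.Adj (p b) m) {i : ℕ} (hai : a ≤ i) (hib : i ≤ b) :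
    G.Adj (p i) m := by
  induction h : b - a using Nat.strong_induction_on generalizing a b with
  | _ k ih =>
  by_cases hc : ∃ c, a < c ∧ c < b ∧ G.Adj (p c) m
  · obtain ⟨c, hac, hcb, hc⟩ := hc
    rcases le_total i c with hic | hci
    · exact ih (c - a) (by omega) (by omega) ha hc hai hic rfl
    · exact ih (b - c) (by omega) hbn hc hb hci hib rfl
  push Not at hc
  by_cases hab : b ≤ a + 1
  · obtain rfl | rfl : i = a ∨ i = b := by omega
    exacts [ha, hb]
  refine absurd ((hp.comp_add (show a + (b - a) ≤ n by omega)).isHole_update (by omega)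
    (fun j hj ↦ hm _ (by omega)) fun j hj ↦ ?_) (hC _)
  rcases Nat.eq_zero_or_pos j with rfl | hj0
  · simpa using ha
  rcases hj.lt_or_eq with hj | rfl
  · exact iff_of_false (hc _ (by omega) (by omega)) (by omega)
  · simpa [show a + (b - a) = b by omega] using hb

theorem not_gemFree (hp : G.IsInducedPathOn p n) {i : ℕ} (hi : i + 3 ≤ n) {m : V}
    (hm : ∀ j, i ≤ j → j ≤ i + 3 → G.Adj (p j) m) : ¬ GemFree G := by
  have adj j k (hj : i ≤ j) (hjk : j + 1 = k) (hk : k ≤ i + 3) : G.Adj (p j) (p k) :=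
    (hp.adj_iff j (by omega) k (by omega)).mpr (Or.inl hjk)
  have nadj j k (hjk : j + 2 ≤ k) (hk : k ≤ n) : ¬ G.Adj (p j) (p k) := by
    rw [hp.adj_iff j (by omega) k hk]; omega
  exact fun hgem ↦ hgem ⟨p i, p (i + 1), p (i + 2), p (i + 3), m,
    adj _ _ le_rfl rfl (by omega), adj _ _ (by omega) rfl (by omega), adj _ _ (by omega) rfl le_rfl,
    nadj _ _ le_rfl (by omega), nadj _ _ (by omega) hi, nadj _ _ (by omega) hi,
    (hm _ le_rfl (by omega)).symm, (hm _ (by omega) (by omega)).symm,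
    (hm _ (by omega) (by omega)).symm, (hm _ (by omega) le_rfl).symm⟩

theorem exists_update_of_adj (hC : ∀ C : List V, ¬ IsHole G C) (hgem : GemFree G)
    (hp : G.IsInducedPathOn p n) {m : V} (hm : ∀ i ≤ n, p i ≠ m) (hadj : G.Adj (p n) m) :
    ∃ l, n ≤ l + 2 ∧ G.IsInducedPathOn (Function.update p (l + 1) m) (l + 1) := by
  classical
  have hex : ∃ i, i ≤ n ∧ G.Adj (p i) m := ⟨n, le_rfl, hadj⟩
  obtain ⟨hln, hl⟩ := Nat.find_spec hex
  refine ⟨Nat.find hex, ?_, (hp.mono hln).update (fun i hi ↦ hm i (hi.trans hln))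
    fun i hi ↦ ⟨fun h ↦ hi.antisymm (Nat.find_min' hex ⟨hi.trans hln, h⟩), fun h ↦ h ▸ hl⟩⟩
  by_contra! hlong
  exact hp.not_gemFree (i := Nat.find hex) (by omega) (fun j hj hj' ↦
    hp.adj_of_le_of_le hC hm le_rfl hl hadj hj (by omega)) hgem

theorem dist_eq (hC : ∀ C : List V, ¬ IsHole G C) (hgem : GemFree G)
    (hp : G.IsInducedPathOn p n) : G.dist (p 0) (p n) = n := by
  suffices ∀ d (p : ℕ → V) n, G.IsInducedPathOn p n → G.dist (p 0) (p n) = d → n ≤ d from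
    hp.dist_le.antisymm (this _ p n hp rfl)
  intro d
  induction d using Nat.strong_induction_on with
  | _ d ih =>
  intro p n hp hd
  rcases d with _ | d
  · exact (hp.injOn (by simp) (by simp) ((hp.reachable.dist_eq_zero_iff).mp hd)).ge
  obtain ⟨m, hmv, hm⟩ := exists_adj_dist_eq_of_dist_eq_add_one hd
  by_cases hmp : ∃ k ≤ n, p k = m
  · obtain ⟨k, hk, rfl⟩ := hmp
    have hkn : k + 1 = n := by have := (hp.adj_iff k hk n le_rfl).mp hmv; omega
    have := ih d (by omega) p k (hp.mono hk) hm
    omega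
  push Not at hmp
  obtain ⟨l, hnl, hq⟩ := hp.exists_update_of_adj hC hgem hmp hmv.symm
  have := ih d (by omega) _ _ hq (by simpa using hm)
  omega

end IsInducedPathOn

theorem Walk.isInducedPathOn_getVert {u v : V} {w : G.Walk u v} (hw : w.length = G.dist u v) :
    G.IsInducedPathOn w.getVert w.length where
  injOn i hi j hj hij := by
    rw [← w.dist_getVert_of_length_eq_dist hw hi, hij, w.dist_getVert_of_length_eq_dist hw hj]
  adj_iff i hi j hj := by
    refine ⟨fun h ↦ ?_, ?_⟩
    · have hne : i ≠ j := by rintro rfl; exact h.ne rfl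
      have := h.diff_dist_adj (u := u)
      rw [w.dist_getVert_of_length_eq_dist hw hi, w.dist_getVert_of_length_eq_dist hw hj] at this
      omega
    · rintro (rfl | rfl)
      · exact w.adj_getVert_succ (by omega)
      · exact (w.adj_getVert_succ (by omega)).symm

end SimpleGraph

theorem stmt17_general {V : Type*} (G : SimpleGraph V)
    (hchordal : ∀ C : List V, ¬ IsHole G C) (hgem : GemFree G) :
    ∀ s : Set V, (G.induce s).Connected →
      ∀ u v : ↥s, (G.induce s).dist u v = G.dist (u : V) (v : V) := by
  intro s hs u v
  obtain ⟨w, hw⟩ := hs.exists_walk_length_eq_dist u v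
  have hdist := ((w.isInducedPathOn_getVert hw).map (SimpleGraph.Embedding.induce s)).dist_eq
    hchordal hgem
  rw [Function.comp_apply, Function.comp_apply, w.getVert_zero, w.getVert_length] at hdist
  rw [← hw]
  exact hdist.symm

theorem stmt17 {V : Type*} [Fintype V] (G : SimpleGraph V)
    (hchordal : ∀ C : List V, ¬ IsHole G C) (hgem : GemFree G) :
    ∀ s : Set V, (G.induce s).Connected →
      ∀ u v : ↥s, (G.induce s).dist u v = G.dist (u : V) (v : V) :=
  stmt17_general G hchordal hgem
end
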